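/- arXiv:1707.04297 — 2 statements merged into one kernel-verified Lean document; each statement's English description precedes it below -/
import Mathlib

section
/- Let ε > 0, k ≥ 1, and a ≥ 2 + 4/(ε(k+1)). Let H be a graph on an vertices such that every two disjoint vertex sets of size at least εn are joined by an edge. Then for any pairwise disjoint sets A₁, …, A_{k+1} ⊆ V(H), each of size at least εan, there is a path (x₁, …, x_n) in H such that x_i ∈ A_j whenever j ≡ i (mod k+1). -/
open SimpleGraph Finset

/-- `H` has a copy (an injective graph homomorphism image) in `G`. -/
def Copy {V W : Type*} (H : SimpleGraph W) (G : SimpleGraph V) : Prop :=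
  ∃ f : H →g G, Function.Injective f

/-- `G → H`: every red/blue colouring of the edges of `G` (red edges given by a
subgraph `R ≤ G`, blue edges by `G \ R`) contains a monochromatic copy of `H`. -/
def Arrow {V W : Type*} (G : SimpleGraph V) (H : SimpleGraph W) : Prop :=
  ∀ R : SimpleGraph V, R ≤ G → Copy H R ∨ Copy H (G \ R)

/-- The size-Ramsey number `r̂(H)`. -/
noncomputable def sizeRamsey {W : Type*} (H : SimpleGraph W) : ℕ :=
  sInf {m | ∃ (N : ℕ) (G : SimpleGraph (Fin N)), Arrow G H ∧ G.edgeSet.ncard = m}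

/-- The (2-colour) Ramsey number `r(H)`. -/
noncomputable def ramseyNum {W : Type*} (H : SimpleGraph W) : ℕ :=
  sInf {N | Arrow (⊤ : SimpleGraph (Fin N)) H}

/-- The `k`-th power `H^k` of a graph: edges between distinct vertices at distance at most `k`. -/
def gpow {V : Type*} (H : SimpleGraph V) (k : ℕ) : SimpleGraph V where
  Adj u v := u ≠ v ∧ ∃ p : H.Walk u v, p.length ≤ k
  symm := ⟨by rintro u v ⟨h, p, hp⟩; exact ⟨h.symm, p.reverse, by simpa using hp⟩⟩
  loopless := ⟨by rintro u ⟨h, -⟩; exact h rfl⟩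

/-- The complete blow-up of `H` where each vertex is replaced by a clique of size `m`. -/
def blowup {V : Type*} (H : SimpleGraph V) (m : ℕ) : SimpleGraph (V × Fin m) where
  Adj x y := (x.1 = y.1 ∧ x.2 ≠ y.2) ∨ H.Adj x.1 y.1
  symm := ⟨by rintro x y (⟨h1, h2⟩ | h); exacts [Or.inl ⟨h1.symm, h2.symm⟩, Or.inr h.symm]⟩
  loopless := ⟨by rintro x (⟨-, h⟩ | h); exacts [h rfl, H.irrefl h]⟩

/-- `P_n^k`, the `k`-th power of the path on `n` vertices. -/
def pathPow (n k : ℕ) : SimpleGraph (Fin n) where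
  Adj i j := i ≠ j ∧ i.val - j.val ≤ k ∧ j.val - i.val ≤ k
  symm := ⟨by rintro i j ⟨h, h1, h2⟩; exact ⟨h.symm, h2, h1⟩⟩
  loopless := ⟨by rintro i ⟨h, -⟩; exact h rfl⟩

/-- `C_n^k`, the `k`-th power of the cycle on `n` vertices. -/
def cyclePow (n k : ℕ) : SimpleGraph (ZMod n) where
  Adj i j := i ≠ j ∧ ∃ d : ℕ, 1 ≤ d ∧ d ≤ k ∧ (i = j + (d : ZMod n) ∨ j = i + (d : ZMod n))
  symm := ⟨by rintro i j ⟨h, d, h1, h2, h3⟩; exact ⟨h.symm, d, h1, h2, h3.symm⟩⟩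
  loopless := ⟨by rintro i ⟨h, -⟩; exact h rfl⟩

/-!
Depth-first search. Grow a path `x 0, x 1, …` with `x j ∈ A (j mod (k+1))`, and keep a set `D`
of discarded vertices: when the last vertex `x i` has no neighbour among the unused vertices of
`A (i+1)`, it is moved from the path to `D`. So no vertex of `D ∩ A c` has a neighbour among the
unused vertices of `A (c+1)`. As long as `|D ∩ A c| < εn` for all `c`, the class following the
end of the path still has at least `|A c| - εn - n/(k+1) ≥ εn` unused vertices (the path meets
it at most `n/(k+1)` times), so the joining property shows that `|D ∩ A c| < εn` survives every
discard, and the search never gets stuck with an empty path. Each step enlarges `D ∪ path` or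
`D`, so the path eventually reaches length `n`.
-/

open Fin.NatCast Function

namespace SimpleGraph

variable {V : Type*} {k : ℕ}

structure IsPathThrough (H : SimpleGraph V) (A : Fin (k + 1) → Finset V) (x : ℕ → V) (i : ℕ) :
    Prop where
  injOn : Set.InjOn x (range i)
  adj : ∀ j, j + 1 < i → H.Adj (x j) (x (j + 1))
  mem : ∀ j < i, x j ∈ A j

lemma eqOn_update_range (x : ℕ → V) (i : ℕ) (u : V) :
    Set.EqOn (update x i u) x (range i) :=
  fun _ hj => update_of_ne (mem_range.1 hj).ne _ _

lemma image_range_update [DecidableEq V] (x : ℕ → V) (i : ℕ) (u : V) :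
    (range (i + 1)).image (update x i u) = insert u ((range i).image x) := by
  rw [range_add_one, image_insert, update_self, image_congr (eqOn_update_range x i u)]

namespace IsPathThrough

variable {H : SimpleGraph V} {A : Fin (k + 1) → Finset V} {x : ℕ → V} {i : ℕ}

lemma mono (h : H.IsPathThrough A x i) {m : ℕ} (hm : m ≤ i) : H.IsPathThrough A x m where
  injOn := h.injOn.mono (by simpa using hm)
  adj j hj := h.adj j (by omega)
  mem j hj := h.mem j (by omega)

variable [DecidableEq V]

lemma update (h : H.IsPathThrough A x i) {u : V} (hu : u ∉ (range i).image x) (huA : u ∈ A i)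
    (hadj : ∀ j, j + 1 = i → H.Adj (x j) u) :
    H.IsPathThrough A (update x i u) (i + 1) := by
  have hx := eqOn_update_range x i u
  refine ⟨?_, fun j hj => ?_, fun j hj => ?_⟩
  · rw [range_add_one, coe_insert, Set.injOn_insert (by simp), ← coe_image, image_congr hx,
      update_self]
    exact ⟨h.injOn.congr hx.symm, by simpa using hu⟩
  · rcases (Nat.lt_succ_iff.1 hj).lt_or_eq with hj | rfl
    · rw [hx (mem_range.2 hj), hx (mem_range.2 (by omega))]
      exact h.adj j hj
    · rw [hx (mem_range.2 (by omega)), update_self]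
      exact hadj j rfl
  · rcases (Nat.lt_succ_iff.1 hj).lt_or_eq with hj | rfl
    · rw [hx (mem_range.2 hj)]
      exact h.mem j hj
    · rwa [update_self]

lemma notMem_image_range (h : H.IsPathThrough A x (i + 1)) : x i ∉ (range i).image x := by
  have h := h.injOn
  rw [range_add_one, coe_insert, Set.injOn_insert (by simp)] at h
  simpa using h.2

lemma card_image_inter_le (h : H.IsPathThrough A x i) (hA : Pairwise (Disjoint on A)) :
    ((range i).image x ∩ A i).card ≤ i / (k + 1) := by
  calc ((range i).image x ∩ A i).card
      ≤ ({j ∈ range i | j ≡ i [MOD k + 1]}.image x).card := by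
        refine card_le_card fun v hv => ?_
        obtain ⟨hv, hvA⟩ := mem_inter.1 hv
        obtain ⟨j, hj, rfl⟩ := mem_image.1 hv
        refine mem_image_of_mem x (mem_filter.2 ⟨hj, ?_⟩)
        refine (CharP.natCast_eq_natCast (Fin (k + 1)) (k + 1)).1 ?_
        by_contra hne
        exact Finset.disjoint_left.1 (hA hne) (h.mem j (mem_range.1 hj)) hvA
    _ ≤ {j ∈ range i | j ≡ i [MOD k + 1]}.card := card_image_le
    _ = i / (k + 1) := by
        rw [← Nat.count_eq_card_filter_range, Nat.count_modEq_card _ k.succ_pos]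
        simp

end IsPathThrough

end SimpleGraph

section DepthFirstSearch

variable {V : Type*} {k n : ℕ} {t : ℝ} {H : SimpleGraph V} {A : Fin (k + 1) → Finset V}

def JoinsLargeSets (H : SimpleGraph V) (t : ℝ) : Prop :=
  ∀ S T : Finset V, Disjoint S T → t ≤ (S.card : ℝ) → t ≤ (T.card : ℝ) →
    ∃ u ∈ S, ∃ v ∈ T, H.Adj u v

lemma JoinsLargeSets.card_lt (hjoin : JoinsLargeSets H t) {S T : Finset V} (hST : Disjoint S T) (hS : t ≤ (S.card : ℝ))
    (hno : ∀ u ∈ S, ∀ v ∈ T, ¬ H.Adj u v) : (T.card : ℝ) < t := by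
  by_contra! hT
  obtain ⟨u, hu, v, hv, huv⟩ := hjoin S T hST hS hT
  exact hno u hu v hv huv

variable [DecidableEq V]

/-- `x 0, …, x (i - 1)` is the current path and `D` the set of discarded vertices. -/
structure IsSearchState (H : SimpleGraph V) (A : Fin (k + 1) → Finset V) (t : ℝ) (n : ℕ)
    (x : ℕ → V) (i : ℕ) (D : Finset V) : Prop where
  isPathThrough : H.IsPathThrough A x i
  le : i ≤ n
  disjoint : Disjoint D ((range i).image x)
  not_adj : ∀ c, ∀ d ∈ D ∩ A c, ∀ v ∈ A (c + 1) \ (D ∪ (range i).image x), ¬ H.Adj d v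
  card_lt : ∀ c, ((D ∩ A c).card : ℝ) < t

lemma insert_union_image_range (x : ℕ → V) (i : ℕ) (D : Finset V) :
    insert (x i) D ∪ (range i).image x = D ∪ (range (i + 1)).image x := by
  rw [range_add_one, image_insert, insert_union, union_insert]

namespace IsSearchState

variable {x : ℕ → V} {i : ℕ} {D : Finset V}

lemma notMem (hs : IsSearchState H A t n x i D) {j : ℕ} (hj : j < i) : x j ∉ D :=
  Finset.disjoint_right.1 hs.disjoint (mem_image_of_mem x (mem_range.2 hj))

lemma le_card_sdiff (hA : Pairwise (Disjoint on A))
    (hsize : ∀ c, 2 * t + n / (k + 1) ≤ ((A c).card : ℝ)) (hs : IsSearchState H A t n x i D) :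
    t ≤ ((A i \ (D ∪ (range i).image x)).card : ℝ) := by
  set P := (range i).image x
  have hsplit : (A i).card ≤ (A i \ (D ∪ P)).card + (D ∩ A i).card + (P ∩ A i).card := by
    rw [← card_sdiff_add_card_inter (A i) (D ∪ P), inter_comm, union_inter_distrib_right,
      add_assoc]
    exact Nat.add_le_add_left (card_union_le _ _) _
  have hP : ((P ∩ A i).card : ℝ) ≤ n / (k + 1) := by
    calc ((P ∩ A i).card : ℝ) ≤ ((i / (k + 1) : ℕ) : ℝ) := by
          exact_mod_cast hs.isPathThrough.card_image_inter_le hA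
      _ ≤ i / (k + 1) := by exact_mod_cast Nat.cast_div_le
      _ ≤ n / (k + 1) := by gcongr; exact_mod_cast hs.le
  have hsplit' : ((A i).card : ℝ) ≤ (A i \ (D ∪ P)).card + (D ∩ A i).card + (P ∩ A i).card :=
    mod_cast hsplit
  linarith [hsize i, hs.card_lt i]

lemma update (hs : IsSearchState H A t n x i D) (hi : i < n) {u : V}
    (hu : u ∈ A i \ (D ∪ (range i).image x)) (hadj : ∀ j, j + 1 = i → H.Adj (x j) u) :
    IsSearchState H A t n (update x i u) (i + 1) D := by
  obtain ⟨huA, hu⟩ := mem_sdiff.1 hu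
  rw [mem_union, not_or] at hu
  refine ⟨hs.isPathThrough.update hu.2 huA hadj, hi, ?_, ?_, hs.card_lt⟩
  · rw [image_range_update, disjoint_insert_right]
    exact ⟨hu.1, hs.disjoint⟩
  · rw [image_range_update]
    intro c d hd v hv
    refine hs.not_adj c d hd v (sdiff_subset_sdiff subset_rfl ?_ hv)
    exact union_subset_union subset_rfl (subset_insert _ _)

lemma discard (hA : Pairwise (Disjoint on A))
    (hjoin : JoinsLargeSets H t)
    (hsize : ∀ c, 2 * t + n / (k + 1) ≤ ((A c).card : ℝ))
    (hs : IsSearchState H A t n x (i + 1) D)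
    (hstuck : ∀ u ∈ A (i + 1) \ (D ∪ (range (i + 1)).image x), ¬ H.Adj (x i) u) :
    IsSearchState H A t n x i (insert (x i) D) := by
  have hxi : x i ∈ A i := hs.isPathThrough.mem i i.lt_succ_self
  have not_adj : ∀ c, ∀ d ∈ insert (x i) D ∩ A c,
      ∀ v ∈ A (c + 1) \ (insert (x i) D ∪ (range i).image x), ¬ H.Adj d v := by
    rw [insert_union_image_range]
    intro c d hd v hv
    obtain ⟨hd, hdA⟩ := mem_inter.1 hd
    rcases mem_insert.1 hd with rfl | hd
    · obtain rfl : c = i := by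
        by_contra hne
        exact Finset.disjoint_left.1 (hA hne) hdA hxi
      exact hstuck v hv
    · exact hs.not_adj c d (mem_inter.2 ⟨hd, hdA⟩) v hv
  refine ⟨hs.isPathThrough.mono i.le_succ, i.le_succ.trans hs.le, ?_, not_adj, fun c => ?_⟩
  · rw [disjoint_insert_left]
    exact ⟨hs.isPathThrough.notMem_image_range,
      hs.disjoint.mono_right (image_subset_image (range_subset_range.2 i.le_succ))⟩
  by_cases hc : c = i
  · subst hc
    refine hjoin.card_lt ?_ (hs.le_card_sdiff hA hsize)
      fun u hu v hv huv => not_adj i v hv u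
        (by rwa [insert_union_image_range, ← Nat.cast_add_one]) huv.symm
    rw [← insert_union_image_range]
    exact disjoint_sdiff_self_left.mono_right (inter_subset_left.trans subset_union_left)
  · rw [insert_inter_of_notMem fun h => hc (by
      by_contra hne
      exact Finset.disjoint_left.1 (hA hne) h hxi)]
    exact hs.card_lt c

end IsSearchState

theorem IsSearchState.exists_isPathThrough [Fintype V] (hA : Pairwise (Disjoint on A))
    (hjoin : JoinsLargeSets H t)
    (ht : 0 < t) (hsize : ∀ c, 2 * t + n / (k + 1) ≤ ((A c).card : ℝ))
    {x : ℕ → V} {i : ℕ} {D : Finset V} (hs : IsSearchState H A t n x i D) :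
    ∃ y, H.IsPathThrough A y n := by
  rcases hs.le.eq_or_lt with rfl | hi
  · exact ⟨x, hs.isPathThrough⟩
  by_cases hext : ∃ u ∈ A i \ (D ∪ (range i).image x), ∀ j, j + 1 = i → H.Adj (x j) u
  · obtain ⟨u, hu, hadj⟩ := hext
    exact (hs.update hi hu hadj).exists_isPathThrough hA hjoin ht hsize
  push Not at hext
  obtain ⟨i, rfl⟩ : ∃ j, i = j + 1 := by
    refine Nat.exists_eq_add_one.2 (Nat.pos_of_ne_zero ?_)
    rintro rfl
    obtain ⟨u, hu⟩ := card_pos.1 (by exact_mod_cast ht.trans_le (hs.le_card_sdiff hA hsize))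
    obtain ⟨j, hj, -⟩ := hext u hu
    omega
  exact (hs.discard hA hjoin hsize fun u hu => by
    obtain ⟨j, hj, hju⟩ := hext u (by rwa [Nat.cast_add_one])
    rwa [Nat.add_right_cancel hj] at hju).exists_isPathThrough hA hjoin ht hsize
termination_by ((D ∪ (range i).image x)ᶜ).card + Dᶜ.card
decreasing_by
  · rw [image_range_update, union_insert]
    exact Nat.add_lt_add_right
      (card_lt_card (compl_ssubset_compl.2 (ssubset_insert (mem_sdiff.1 hu).2))) _
  · subst_vars
    rw [insert_union_image_range]
    exact Nat.add_lt_add_left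
      (card_lt_card (compl_ssubset_compl.2 (ssubset_insert (hs.notMem i.lt_succ_self)))) _

theorem exists_isPathThrough [Fintype V] (hA : Pairwise (Disjoint on A))
    (hjoin : JoinsLargeSets H t)
    (ht : 0 < t) (hsize : ∀ c, 2 * t + n / (k + 1) ≤ ((A c).card : ℝ)) :
    ∃ x, H.IsPathThrough A x n := by
  obtain ⟨v, -⟩ : (A 0).Nonempty := card_pos.1 (by
    exact_mod_cast (by positivity : (0 : ℝ) < 2 * t + n / (k + 1)).trans_le (hsize 0))
  refine IsSearchState.exists_isPathThrough hA hjoin ht hsize (x := fun _ => v) (i := 0)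
    (D := ∅) ⟨⟨by simp, by simp, by simp⟩, n.zero_le, disjoint_empty_left _, by simp, by simpa using ht⟩

end DepthFirstSearch

lemma two_mul_add_div_le {ε a n κ : ℝ} (hε : 0 < ε) (hκ : 0 < κ) (hn : 0 ≤ n)
    (ha : 2 + 4 / (ε * κ) ≤ a) : 2 * (ε * n) + n / κ ≤ ε * a * n := by
  calc 2 * (ε * n) + n / κ ≤ 2 * (ε * n) + 4 / (ε * κ) * (ε * n) := by
        have h : 4 / (ε * κ) * (ε * n) = 4 * (n / κ) := by field_simp
        rw [h]
        linarith [div_nonneg hn hκ.le]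
    _ = (2 + 4 / (ε * κ)) * (ε * n) := by ring
    _ ≤ a * (ε * n) := by gcongr
    _ = ε * a * n := by ring

/-- Lemma 3.2: a path on `n` vertices running cyclically through the
disjoint sets `A₁, …, A_{k+1}`. -/
theorem stmt_8 (k a n : ℕ) (ε : ℝ) (hε : 0 < ε)
    (ha : 2 + 4 / (ε * (k + 1)) ≤ (a : ℝ))
    (H : SimpleGraph (Fin (a * n)))
    (hjoin : ∀ S T : Finset (Fin (a * n)), Disjoint S T →
      ε * n ≤ (S.card : ℝ) → ε * n ≤ (T.card : ℝ) → ∃ u ∈ S, ∃ v ∈ T, H.Adj u v)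
    (A : Fin (k + 1) → Finset (Fin (a * n)))
    (hdisj : ∀ i j, i ≠ j → Disjoint (A i) (A j))
    (hsize : ∀ i, ε * a * n ≤ ((A i).card : ℝ)) :
    ∃ x : Fin n → Fin (a * n), Function.Injective x ∧
      (∀ i : ℕ, ∀ h : i + 1 < n, H.Adj (x ⟨i, by omega⟩) (x ⟨i + 1, h⟩)) ∧
      (∀ i : Fin n, x i ∈ A ⟨(i : ℕ) % (k + 1), Nat.mod_lt _ (by omega)⟩) := by
  rcases n.eq_zero_or_pos with rfl | hn
  · exact ⟨Fin.elim0, fun i => i.elim0, fun i h => by omega, fun i => i.elim0⟩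
  have hsize' : ∀ c, 2 * (ε * n) + n / (k + 1) ≤ ((A c).card : ℝ) := fun c =>
    (two_mul_add_div_le hε (by positivity) n.cast_nonneg ha).trans (hsize c)
  obtain ⟨y, hy⟩ := exists_isPathThrough (fun i j h => hdisj i j h) hjoin (by positivity) hsize'
  exact ⟨fun i => y i, fun i j h => Fin.ext (hy.injOn (by simp) (by simp) h),
    fun i h => hy.adj i h, fun i => hy.mem i i.2⟩
end

section
/- Let F be a graph and suppose every 2-colouring of the edges of the complete graph on V(F) (extending a given colouring of E(F^k) with non-edges of F^k coloured red) yields either a blue path P_n or a balanced complete (k+1)-partite red subgraph on at least |V(F)| − kn vertices. If |V(F)| ≥ an/2 with a ≥ 6k, and F has the property that any k+1 pairwise disjoint vertex sets of size at least εan each (ε = 1/(3(k+1))) admit a path alternating cyclically through them, then every red/blue colouring of E(F^k) contains a blue copy of P_n or a red copy of P_n^k. -/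
open SimpleGraph Finset

/-!
As long as the blue graph has no path on `n` vertices, depth-first search can be stopped as soon as
`q` vertices are finished: no blue edge joins them to the unvisited vertices, and the stack, being a
blue path, holds fewer than `n` vertices. Repeating this `k + 1` times with `q = ⌈an / (3(k + 1))⌉`,
for which `|V| ≥ an / 2` and `a ≥ 6k` leave room, gives `k + 1` disjoint sets with no blue edges
between them. The path property of `F` yields a path running through them cyclically; two of its
vertices at distance at most `k` lie in different sets, so the corresponding edge of `F^k` is red.
-/

namespace SimpleGraph

variable {V : Type*} {G : SimpleGraph V}

def Separated (G : SimpleGraph V) (s t : Finset V) : Prop :=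
  Disjoint s t ∧ ∀ u ∈ s, ∀ w ∈ t, ¬ G.Adj u w

theorem Separated.symm {s t : Finset V} (h : G.Separated s t) : G.Separated t s :=
  ⟨h.1.symm, fun u hu w hw hadj => h.2 w hw u hu hadj.symm⟩

theorem length_lt_of_not_exists_path {n : ℕ}
    (hG : ¬ ∃ x : Fin n → V, Function.Injective x ∧
      ∀ i : ℕ, ∀ h : i + 1 < n, G.Adj (x ⟨i, by omega⟩) (x ⟨i + 1, h⟩))
    {l : List V} (hnd : l.Nodup) (hc : l.IsChain G.Adj) : l.length < n := by
  by_contra! hlen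
  exact hG ⟨fun i => l[i.val], fun i j h => Fin.ext ((hnd.getElem_inj_iff).mp h),
    fun i hi => List.isChain_iff_getElem.mp hc i (by omega)⟩

section DepthFirstSearch

variable [DecidableEq V] {m : ℕ}

-- A depth-first search state: `T` holds the finished vertices and `P` the stack, top first.
private theorem exists_separated_subset_of_stack
    (hG : ∀ l : List V, l.Nodup → l.IsChain G.Adj → l.length ≤ m)
    {S : Finset V} {t : ℕ} (ht : t ≤ #S) (T : Finset V) (P : List V) (hTS : T ⊆ S)
    (hTt : #T ≤ t) (hPS : ∀ x ∈ P, x ∈ S \ T) (hnd : P.Nodup) (hc : P.IsChain G.Adj)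
    (hsep : ∀ u ∈ T, ∀ w ∈ S \ T, w ∉ P → ¬ G.Adj u w) :
    ∃ T C : Finset V, T ⊆ S ∧ C ⊆ S ∧ #T = t ∧ #C ≤ m ∧
      ∀ u ∈ T, ∀ w ∈ S \ (T ∪ C), ¬ G.Adj u w := by
  rcases hTt.eq_or_lt with hTt | hTt
  · refine ⟨T, P.toFinset, hTS, fun x hx => (mem_sdiff.1 (hPS x (List.mem_toFinset.1 hx))).1,
      hTt, (List.toFinset_card_le P).trans (hG P hnd hc), fun u hu w hw => ?_⟩
    simp only [mem_sdiff, mem_union, List.mem_toFinset, not_or] at hw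
    exact hsep u hu w (mem_sdiff.2 ⟨hw.1, hw.2.1⟩) hw.2.2
  match P with
  | [] =>
    obtain ⟨v, hv⟩ : (S \ T).Nonempty := by
      rw [← card_pos, card_sdiff_of_subset hTS]; omega
    have hm : 1 ≤ m := hG [v] (List.nodup_singleton v) (List.isChain_singleton v)
    exact exists_separated_subset_of_stack hG ht T [v] hTS hTt.le (by simpa using hv)
      (List.nodup_singleton v) (List.isChain_singleton v) fun u hu w hw _ => hsep u hu w hw
        List.not_mem_nil
  | v :: P =>
    by_cases hpush : ∃ w ∈ S \ T, w ∉ v :: P ∧ G.Adj v w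
    · obtain ⟨w, hw, hwP, hvw⟩ := hpush
      have hlen := hG (w :: v :: P) (List.nodup_cons.2 ⟨hwP, hnd⟩)
        (List.isChain_cons_cons.2 ⟨hvw.symm, hc⟩)
      exact exists_separated_subset_of_stack hG ht T (w :: v :: P) hTS hTt.le
        (List.forall_mem_cons.2 ⟨hw, hPS⟩) (List.nodup_cons.2 ⟨hwP, hnd⟩)
        (List.isChain_cons_cons.2 ⟨hvw.symm, hc⟩)
        fun u hu x hx hxP => hsep u hu x hx fun h => hxP (List.mem_cons_of_mem w h)
    · push Not at hpush
      obtain ⟨hvS, hvT⟩ := mem_sdiff.1 (hPS v List.mem_cons_self)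
      obtain ⟨hvP, hndP⟩ := List.nodup_cons.1 hnd
      exact exists_separated_subset_of_stack hG ht (insert v T) P (insert_subset hvS hTS)
        (by rw [card_insert_of_notMem hvT]; omega)
        (fun x hx => by
          have hxv : x ≠ v := fun h => hvP (h ▸ hx)
          simpa [hxv] using hPS x (List.mem_cons_of_mem v hx))
        hndP hc.tail fun u hu w hw hwP => by
          rw [mem_sdiff, mem_insert, not_or] at hw
          have hwvP : w ∉ v :: P := by simp [hw.2.1, hwP]
          rcases mem_insert.1 hu with rfl | hu
          · exact hpush w (mem_sdiff.2 ⟨hw.1, hw.2.2⟩) hwvP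
          · exact hsep u hu w (mem_sdiff.2 ⟨hw.1, hw.2.2⟩) hwvP
termination_by (t - #T, m - P.length)
decreasing_by
  · exact Prod.Lex.right _ (by simp only [List.length_singleton, List.length_nil]; omega)
  · exact Prod.Lex.right _ (by simp only [List.length_cons] at hlen ⊢; omega)
  · exact Prod.Lex.left _ _ (by rw [card_insert_of_notMem hvT]; omega)

theorem exists_separated_subset (hG : ∀ l : List V, l.Nodup → l.IsChain G.Adj → l.length ≤ m)
    {S : Finset V} {t : ℕ} (ht : t ≤ #S) :
    ∃ T C : Finset V, T ⊆ S ∧ C ⊆ S ∧ #T = t ∧ #C ≤ m ∧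
      ∀ u ∈ T, ∀ w ∈ S \ (T ∪ C), ¬ G.Adj u w :=
  exists_separated_subset_of_stack hG ht ∅ [] (empty_subset S) (by simp) (by simp) List.nodup_nil
    List.isChain_nil (by simp)

end DepthFirstSearch

theorem _root_.Fin.pairwise_cons {α : Type*} {R : α → α → Prop} (hR : ∀ x y, R x y → R y x)
    {j : ℕ} {a : α} {f : Fin j → α} (ha : ∀ i, R a (f i))
    (hf : Pairwise fun i i' => R (f i) (f i')) :
    Pairwise fun i i' =>
      R ((Fin.cons a f : Fin (j + 1) → α) i) ((Fin.cons a f : Fin (j + 1) → α) i') := by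
  intro i i' hii'
  cases i using Fin.cases <;> cases i' using Fin.cases
  · exact absurd rfl hii'
  · exact ha _
  · exact hR _ _ (ha _)
  · exact hf (ne_of_apply_ne Fin.succ hii')

theorem exists_pairwise_separated [DecidableEq V] {m : ℕ}
    (hG : ∀ l : List V, l.Nodup → l.IsChain G.Adj → l.length ≤ m) (q : ℕ) :
    ∀ (j : ℕ) {S : Finset V}, q * (j + 1) + m * j ≤ #S →
      ∃ A : Fin (j + 1) → Finset V, (∀ i, A i ⊆ S) ∧ (∀ i, #(A i) = q) ∧
        Pairwise fun i i' => G.Separated (A i) (A i')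
  | 0, S, hS => by
    obtain ⟨T, hTS, hT⟩ := exists_subset_card_eq (show q ≤ #S by omega)
    exact ⟨fun _ => T, fun _ => hTS, fun _ => hT, Subsingleton.pairwise (α := Fin 1)⟩
  | j + 1, S, hS => by
    obtain ⟨T, C, hTS, hCS, hT, hC, hsep⟩ := exists_separated_subset hG (t := q) (by nlinarith)
    have hS' : q * (j + 1) + m * j ≤ #(S \ (T ∪ C)) := by
      have hTC := card_union_le T C
      rw [card_sdiff_of_subset (union_subset hTS hCS)]
      rw [show q * (j + 1 + 1) = q * (j + 1) + q by ring,
        show m * (j + 1) = m * j + m by ring] at hS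
      omega
    obtain ⟨A, hAS, hA, hApw⟩ := exists_pairwise_separated hG q j hS'
    refine ⟨Fin.cons T A, Fin.forall_fin_succ.2 ⟨hTS, fun i => (hAS i).trans sdiff_subset⟩,
      Fin.forall_fin_succ.2 ⟨hT, hA⟩,
      Fin.pairwise_cons (R := G.Separated) (fun _ _ => Separated.symm) ?_ hApw⟩
    intro i
    refine ⟨Finset.disjoint_left.2 fun x hxT hxA => ?_, fun u hu w hw => hsep u hu w (hAS i hw)⟩
    exact (mem_sdiff.1 (hAS i hxA)).2 (mem_union_left C hxT)

theorem exists_walk_length_of_path {F : SimpleGraph V} {n : ℕ} {x : Fin n → V}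
    (hx : ∀ i : ℕ, ∀ h : i + 1 < n, F.Adj (x ⟨i, by omega⟩) (x ⟨i + 1, h⟩)) :
    ∀ (d i : ℕ) (h : i + d < n), ∃ p : F.Walk (x ⟨i, by omega⟩) (x ⟨i + d, h⟩), p.length = d
  | 0, _, _ => ⟨.nil, rfl⟩
  | d + 1, i, h => by
    obtain ⟨p, hp⟩ := exists_walk_length_of_path hx d i (by omega)
    exact ⟨p.concat (hx (i + d) h), by rw [Walk.length_concat, hp]⟩

theorem gpow_adj_of_pathPow_adj {F : SimpleGraph V} {n k : ℕ} {x : Fin n → V}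
    (hinj : Function.Injective x)
    (hx : ∀ i : ℕ, ∀ h : i + 1 < n, F.Adj (x ⟨i, by omega⟩) (x ⟨i + 1, h⟩))
    {i j : Fin n} (hij : (pathPow n k).Adj i j) : (gpow F k).Adj (x i) (x j) := by
  wlog hle : i ≤ j generalizing i j
  · exact (this hij.symm (le_of_not_ge hle)).symm
  obtain ⟨hne, -, hji⟩ := hij
  obtain ⟨p, hp⟩ := exists_walk_length_of_path hx (j - i) i (by omega)
  refine ⟨hinj.ne hne, p.copy rfl (congrArg x (Fin.ext (by simp; omega))), ?_⟩
  rw [Walk.length_copy, hp]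
  exact hji

end SimpleGraph

theorem mod_ne_of_pathPow_adj {n k : ℕ} {i j : Fin n} (h : (pathPow n k).Adj i j) :
    (i : ℕ) % (k + 1) ≠ (j : ℕ) % (k + 1) := by
  wlog hle : i ≤ j generalizing i j
  · exact (this h.symm (le_of_not_ge hle)).symm
  obtain ⟨hne, -, hji⟩ := h
  have hlt : (i : ℕ) < j := lt_of_le_of_ne hle (Fin.val_ne_of_ne hne)
  intro hmod
  have := Nat.eq_zero_of_dvd_of_lt
    (Nat.dvd_of_mod_eq_zero (Nat.sub_mod_eq_zero_of_mod_eq hmod.symm))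
    (show (j : ℕ) - i < k + 1 by omega)
  omega

theorem exists_part_card {k m a N : ℕ} (ha : 6 * k ≤ a) (hN : a * (m + 1) ≤ 2 * N) :
    ∃ q : ℕ, a * (m + 1) ≤ 3 * (k + 1) * q ∧ q * (k + 1) + m * k ≤ N := by
  obtain ⟨q, r, hqr, hr⟩ : ∃ q r, 3 * (q * (k + 1)) + r = a * (m + 1) + 3 * k + 2 ∧
      r < 3 * (k + 1) := by
    set A := a * (m + 1) + 3 * k + 2
    refine ⟨A / (3 * (k + 1)), A % (3 * (k + 1)), ?_, Nat.mod_lt _ (by omega)⟩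
    linarith [Nat.div_add_mod A (3 * (k + 1))]
  have hka : 6 * (m * k) + 6 * k ≤ a * (m + 1) := by nlinarith
  refine ⟨q, by linarith, by omega⟩

/-- Claim 3.3: given a red/blue colouring of `E(F^k)` (blue edges the graph
`blue ≤ F^k`, all other pairs red) whose extension to the complete graph yields a blue `P_n`
or a large balanced red complete `(k+1)`-partite subgraph, and given the cyclic-path property
of `F`, there is a blue `P_n` or a red `P_n^k`. -/
theorem stmt_12 {V : Type*} [Fintype V] (k n a : ℕ) (ha : 6 * k ≤ a)
    (F : SimpleGraph V) (blue : SimpleGraph V)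
    (hcard : (a * n : ℝ) / 2 ≤ Fintype.card V)
    (hpathprop : ∀ A : Fin (k + 1) → Finset V, (∀ i j, i ≠ j → Disjoint (A i) (A j)) →
      (∀ i, (1 / (3 * ((k : ℝ) + 1))) * a * n ≤ ((A i).card : ℝ)) →
      ∃ x : Fin n → V, Function.Injective x ∧
        (∀ i : ℕ, ∀ h : i + 1 < n, F.Adj (x ⟨i, by omega⟩) (x ⟨i + 1, h⟩)) ∧
        (∀ i : Fin n, x i ∈ A ⟨(i : ℕ) % (k + 1), Nat.mod_lt _ (by omega)⟩)) :
    (∃ x : Fin n → V, Function.Injective x ∧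
      ∀ i : ℕ, ∀ h : i + 1 < n, blue.Adj (x ⟨i, by omega⟩) (x ⟨i + 1, h⟩)) ∨
    (∃ x : Fin n → V, Function.Injective x ∧
      ∀ i j : Fin n, (pathPow n k).Adj i j →
        (gpow F k).Adj (x i) (x j) ∧ ¬ blue.Adj (x i) (x j)) := by
  classical
  by_cases hblue : ∃ x : Fin n → V, Function.Injective x ∧
      ∀ i : ℕ, ∀ h : i + 1 < n, blue.Adj (x ⟨i, by omega⟩) (x ⟨i + 1, h⟩)
  · exact Or.inl hblue
  have hlen (l : List V) := length_lt_of_not_exists_path hblue (l := l)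
  obtain ⟨m, rfl⟩ := Nat.exists_eq_add_one.2 (hlen [] List.nodup_nil List.isChain_nil)
  have hV : a * (m + 1) ≤ 2 * Fintype.card V := by
    have : ((a * (m + 1) : ℕ) : ℝ) ≤ ((2 * Fintype.card V : ℕ) : ℝ) := by
      push_cast at hcard ⊢
      linarith
    exact_mod_cast this
  obtain ⟨q, hqa, hqV⟩ := exists_part_card ha hV
  obtain ⟨A, -, hAcard, hAsep⟩ := exists_pairwise_separated (G := blue)
    (fun l hnd hc => Nat.lt_succ_iff.1 (hlen l hnd hc)) q k (S := univ) (by rwa [card_univ])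
  have hAcard' (i : Fin (k + 1)) : 1 / (3 * ((k : ℝ) + 1)) * a * ↑(m + 1) ≤ #(A i) := by
    have := (Nat.cast_le (α := ℝ)).2 hqa
    push_cast at this ⊢
    rw [hAcard, div_mul_eq_mul_div, div_mul_eq_mul_div, div_le_iff₀ (by positivity)]
    linarith
  obtain ⟨x, hxinj, hxF, hxA⟩ := hpathprop A (fun i j h => (hAsep h).1) hAcard'
  refine Or.inr ⟨x, hxinj, fun i j hij => ⟨gpow_adj_of_pathPow_adj hxinj hxF hij, ?_⟩⟩
  exact (hAsep fun h => mod_ne_of_pathPow_adj hij (Fin.mk.inj_iff.1 h)).2 _ (hxA i) _ (hxA j)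
end
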